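/- Fix a class y ∈ Y and a nonempty set N of training points with |N| = K, and define the single-instance proxy game on the m labeling functions by the utility v(S) = (1/K) Σ_{i ∈ N} Θ_S^y(i) − 1/C for every coalition S ⊆ {1, …, m} (so v(∅) = 0). Then the Shapley value of labeling function j in this game equals (1/K) Σ_{i ∈ N} φ_{ij}^y. -/

import Mathlib

open Finset

/-- Shapley value of player `j` in the cooperative game `v` on the finite player set `I`. -/
noncomputable def shapley {α : Type*} [DecidableEq α] (I : Finset α) (v : Finset α → ℝ)
    (j : α) : ℝ :=
  (1 / (I.card : ℝ)) * ∑ S ∈ (I.erase j).powerset,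
    (v (insert j S) - v S) / ((I.card - 1).choose S.card : ℝ)

/-- Marginal utility `ψ(a,b)` of a correct LF joining a coalition with `a` correct and `b`
incorrect LFs, with `C` classes. -/
noncomputable def psi (C a b : ℕ) : ℝ :=
  if a + b = 0 then 1 - 1 / (C : ℝ)
  else ((a : ℝ) + 1) / ((a : ℝ) + (b : ℝ) + 1) - (a : ℝ) / ((a : ℝ) + (b : ℝ))

/-- `SV⁺_{p,w}` (equals `0` when `p = 0` since the outer sum is empty). -/
noncomputable def SVpos (C p w : ℕ) : ℝ :=
  (1 / ((p : ℝ) + (w : ℝ))) * ∑ i ∈ Finset.range p, ∑ j ∈ Finset.range (w + 1),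
    psi C i j * ((p - 1).choose i : ℝ) * (w.choose j : ℝ) / ((p + w - 1).choose (i + j) : ℝ)

/-- `SV⁻_{p,w}`. -/
noncomputable def SVneg (C p w : ℕ) : ℝ :=
  ((p : ℝ) / ((p : ℝ) + (w : ℝ)) - 1 / (C : ℝ) - (p : ℝ) * SVpos C p w) / (w : ℝ)

/-- The MV single-point game: `P` the correct players, `W` the incorrect players,
utility `|S ∩ P|/|S| − 1/C` for nonempty `S`, and `0` on the empty coalition. -/
noncomputable def mvGame {α : Type*} [DecidableEq α] (C : ℕ) (P W : Finset α)
    (S : Finset α) : ℝ :=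
  if S = ∅ then 0 else ((S ∩ P).card : ℝ) / (S.card : ℝ) - 1 / (C : ℝ)

/-- Majority-voting prediction `Θ_S^c(i)`: the fraction of non-abstaining LFs in the
coalition `S` that vote class `c` on training point `i`; `1/C` if all LFs in `S` abstain.
Weak labels are `Option (Fin C)`, with `none` meaning abstention. -/
noncomputable def theta (C n m : ℕ) (L : Fin n → Fin m → Option (Fin C))
    (S : Finset (Fin m)) (c : Fin C) (i : Fin n) : ℝ :=
  if (S.filter (fun j => L i j ≠ none)).card = 0 then 1 / (C : ℝ)
  else ((S.filter (fun j => L i j = some c)).card : ℝ) /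
    ((S.filter (fun j => L i j ≠ none)).card : ℝ)

/-- WeShap weight `φ_{ij}^c`. -/
noncomputable def weshapWeight (C n m : ℕ) (L : Fin n → Fin m → Option (Fin C))
    (i : Fin n) (j : Fin m) (c : Fin C) : ℝ :=
  let p := (Finset.univ.filter (fun k : Fin m => L i k = some c)).card
  let w := (Finset.univ.filter (fun k : Fin m => L i k ≠ none ∧ L i k ≠ some c)).card
  if L i j = some c then SVpos C p w
  else if L i j = none then 0
  else SVneg C p w

/-!
Shapley values are linear and the constant `1/C` cancels in marginal contributions, so it
suffices to treat the game `S ↦ Θ_S^y(i)` of a single training point. Its worth depends only on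
the numbers `a` and `b` of members of `S` voting `y` and voting another class. Abstaining LFs are
null players; for the other LFs they only rescale the Shapley weights, since adding one more null
player turns `1/binom(N+1, s) + 1/binom(N+1, s+1)` into `(N+2)/((N+1) binom(N, s))`. A `y`-voter's
marginal contribution is `ψ(a, b)`, which leaves exactly `SV⁺`. All dissenting LFs get the same
value, and efficiency (the values add up to `v(univ) − v(∅)`) forces it to be `SV⁻`.
-/

variable {α : Type*} [DecidableEq α]

theorem inv_choose_succ_add_inv_choose_succ_succ {s q : ℕ} (hq : q ≤ s) :
    1 / ((s + 1).choose q : ℝ) + 1 / ((s + 1).choose (q + 1) : ℝ) =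
      (s + 2) / ((s + 1) * (s.choose q : ℝ)) := by
  have h₁ : ((s + 1).choose q : ℝ) * (s + 1 - q) = s.choose q * (s + 1) := by
    have := Nat.choose_mul_succ_eq s q
    rw [Nat.sub_add_comm hq] at this
    have h := congrArg (Nat.cast : ℕ → ℝ) this
    push_cast [Nat.cast_sub hq] at h
    linarith
  have h₂ : ((s + 1).choose (q + 1) : ℝ) * (q + 1) = (s + 1) * s.choose q := by
    exact_mod_cast (Nat.add_one_mul_choose_eq s q).symm
  have h₀ : (0 : ℝ) < s.choose q := by exact_mod_cast Nat.choose_pos hq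
  have h₃ : (0 : ℝ) < (s + 1).choose q := by exact_mod_cast Nat.choose_pos (by omega)
  have h₄ : (0 : ℝ) < (s + 1).choose (q + 1) := by exact_mod_cast Nat.choose_pos (by omega)
  rw [div_add_div _ _ h₃.ne' h₄.ne', div_eq_div_iff (by positivity) (by positivity)]
  linear_combination (-((s + 1).choose (q + 1) : ℝ)) * h₁ - ((s + 1).choose q : ℝ) * h₂

theorem sum_powerset_union_div_choose {J R : Finset α} (hJR : Disjoint J R)
    (g : Finset α → ℝ) :
    ∑ S ∈ (J ∪ R).powerset, g (S ∩ J) / ((#J + #R).choose #S : ℝ) =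
      (#J + #R + 1) / (#J + 1) * ∑ T ∈ J.powerset, g T / ((#J).choose #T : ℝ) := by
  induction R using Finset.induction_on with
  | empty =>
    rw [union_empty, card_empty, Nat.add_zero, Nat.cast_zero, add_zero,
      div_self (by positivity), one_mul]
    refine sum_congr rfl fun S hS => ?_
    rw [inter_eq_left.2 (mem_powerset.1 hS)]
  | insert x R hx ih =>
    rw [disjoint_insert_right] at hJR
    have hxJR : x ∉ J ∪ R := by simp [hx, hJR.1]
    have hcard : ∀ S ∈ (J ∪ R).powerset, #S ≤ #J + #R := fun S hS =>
      (card_le_card (mem_powerset.1 hS)).trans (card_union_le J R)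
    rw [union_insert, sum_powerset_insert hxJR, ← sum_add_distrib, card_insert_of_notMem hx,
      ← add_assoc]
    calc ∑ S ∈ (J ∪ R).powerset,
          (g (S ∩ J) / ((#J + #R + 1).choose #S : ℝ) +
            g (insert x S ∩ J) / ((#J + #R + 1).choose #(insert x S) : ℝ))
        = (#J + #R + 2) / (#J + #R + 1) *
            ∑ S ∈ (J ∪ R).powerset, g (S ∩ J) / ((#J + #R).choose #S : ℝ) := by
          rw [mul_sum]
          refine sum_congr rfl fun S hS => ?_
          have hxS : x ∉ S := fun h => hxJR (mem_powerset.1 hS h)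
          rw [insert_inter_of_notMem hJR.1, card_insert_of_notMem hxS]
          have key := inv_choose_succ_add_inv_choose_succ_succ (hcard S hS)
          push_cast at key
          simp only [div_eq_mul_one_div (g (S ∩ J))]
          rw [← mul_add, key, ← div_div]
          ring
      _ = _ := by
          rw [ih hJR.2]
          push_cast
          field_simp
          ring

theorem shapley_eq_of_marginal_eq {I J : Finset α} {v : Finset α → ℝ} {j : α} (hj : j ∈ I)
    (hJ : J ⊆ I.erase j) (g : Finset α → ℝ)
    (hg : ∀ S ⊆ I.erase j, v (insert j S) - v S = g (S ∩ J)) :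
    shapley I v j = 1 / (#J + 1) * ∑ T ∈ J.powerset, g T / ((#J).choose #T : ℝ) := by
  obtain ⟨R, hIJR, hJR⟩ : ∃ R, I.erase j = J ∪ R ∧ Disjoint J R :=
    ⟨_, (union_sdiff_of_subset hJ).symm, disjoint_sdiff⟩
  have hcard : #I = #J + #R + 1 := by
    rw [← card_erase_add_one hj, hIJR, card_union_of_disjoint hJR]
  rw [shapley, sum_congr rfl fun S hS => by rw [hg S (mem_powerset.1 hS)], hcard,
    Nat.add_sub_cancel, hIJR, sum_powerset_union_div_choose hJR]
  push_cast
  field_simp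

theorem shapley_eq_zero_of_forall_insert_eq {I : Finset α} {v : Finset α → ℝ} {j : α}
    (hv : ∀ S ⊆ I.erase j, v (insert j S) = v S) : shapley I v j = 0 := by
  rw [shapley, sum_eq_zero fun S hS => by rw [hv S (mem_powerset.1 hS), sub_self, zero_div],
    mul_zero]

theorem sum_powerset_union_inter {M : Type*} [AddCommMonoid M] {A B : Finset α}
    (hAB : Disjoint A B) (f : Finset α → Finset α → M) :
    ∑ T ∈ (A ∪ B).powerset, f (T ∩ A) (T ∩ B) =
      ∑ T₁ ∈ A.powerset, ∑ T₂ ∈ B.powerset, f T₁ T₂ := by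
  rw [← sum_product']
  refine sum_nbij' (fun T => (T ∩ A, T ∩ B)) (fun T => T.1 ∪ T.2) ?_ ?_ ?_ ?_ fun _ _ => rfl
  · intro T _
    simp only [mem_product, mem_powerset]
    exact ⟨inter_subset_right, inter_subset_right⟩
  · simp only [mem_product, mem_powerset]
    exact fun T hT => union_subset_union hT.1 hT.2
  · simp only [mem_powerset]
    intro T hT
    rw [← inter_union_distrib_left, inter_eq_left.2 hT]
  · simp only [mem_product, mem_powerset]
    rintro ⟨T₁, T₂⟩ ⟨h₁, h₂⟩
    have hAB' := disjoint_left.1 hAB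
    ext x <;> simp only [mem_inter, mem_union] <;> grind

theorem sum_powerset_union_card_inter {R : Type*} [CommSemiring R] {A B : Finset α}
    (hAB : Disjoint A B) (G : ℕ → ℕ → R) :
    ∑ T ∈ (A ∪ B).powerset, G #(T ∩ A) #(T ∩ B) =
      ∑ a ∈ range (#A + 1), ∑ b ∈ range (#B + 1), ((#A).choose a * (#B).choose b : R) * G a b := by
  rw [sum_powerset_union_inter hAB fun T₁ T₂ => G #T₁ #T₂,
    sum_powerset_apply_card fun a => ∑ T₂ ∈ B.powerset, G a #T₂]
  refine sum_congr rfl fun a _ => ?_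
  rw [sum_powerset_apply_card, nsmul_eq_mul, mul_sum]
  refine sum_congr rfl fun b _ => ?_
  rw [nsmul_eq_mul]
  ring

def countGame (P W : Finset α) (F : ℕ → ℕ → ℝ) (S : Finset α) : ℝ :=
  F #(S ∩ P) #(S ∩ W)

noncomputable def countShapley (F : ℕ → ℕ → ℝ) (p w : ℕ) : ℝ :=
  (1 / ((p : ℝ) + (w : ℝ))) * ∑ a ∈ range p, ∑ b ∈ range (w + 1),
    (F (a + 1) b - F a b) * ((p - 1).choose a : ℝ) * (w.choose b : ℝ) /
      ((p + w - 1).choose (a + b) : ℝ)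

theorem shapley_countGame_of_mem_left {I P W : Finset α} (hP : P ⊆ I) (hW : W ⊆ I)
    (hPW : Disjoint P W) (F : ℕ → ℕ → ℝ) {j : α} (hj : j ∈ P) :
    shapley I (countGame P W F) j = countShapley F #P #W := by
  have hjW : j ∉ W := disjoint_left.1 hPW hj
  set P' := P.erase j
  have hP'W : Disjoint P' W := disjoint_of_subset_left (erase_subset j P) hPW
  have hJ : P' ∪ W ⊆ I.erase j :=
    union_subset (erase_subset_erase j hP) (subset_erase.2 ⟨hW, hjW⟩)
  have hcardP : #P = #P' + 1 := (card_erase_add_one hj).symm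
  rw [shapley_eq_of_marginal_eq (hP hj) hJ
    (fun T => (F (#(T ∩ P') + 1) #(T ∩ W) - F #(T ∩ P') #(T ∩ W)))]
  · have hcardT : ∀ T ∈ (P' ∪ W).powerset, #T = #(T ∩ P') + #(T ∩ W) := fun T hT => by
      rw [← card_union_of_disjoint (hP'W.mono inter_subset_right inter_subset_right),
        ← inter_union_distrib_left, inter_eq_left.2 (mem_powerset.1 hT)]
    rw [sum_congr rfl fun T hT => by rw [hcardT T hT], card_union_of_disjoint hP'W,
      sum_powerset_union_card_inter hP'W
        fun a b => (F (a + 1) b - F a b) / ((#P' + #W).choose (a + b) : ℝ),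
      countShapley, hcardP, Nat.add_sub_cancel,
      Nat.add_right_comm, Nat.add_sub_cancel]
    push_cast
    congr 1
    · ring
    · refine sum_congr rfl fun a _ => sum_congr rfl fun b _ => ?_
      ring
  · intro S hS
    have hjS : j ∉ S := fun h => (mem_erase.1 (hS h)).1 rfl
    have hSP : S ∩ (P' ∪ W) ∩ P' = S ∩ P := by
      ext x; simp only [mem_inter, mem_union, P', mem_erase]; grind
    have hSW : S ∩ (P' ∪ W) ∩ W = S ∩ W := by
      ext x; simp only [mem_inter, mem_union]; grind
    simp only [countGame, hSP, hSW, insert_inter_of_mem hj, insert_inter_of_notMem hjW,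
      card_insert_of_notMem fun h => hjS (mem_inter.1 h).1]

theorem shapley_countGame_of_mem_right {I P W : Finset α} (hP : P ⊆ I) (hW : W ⊆ I)
    (hPW : Disjoint P W) (F : ℕ → ℕ → ℝ) {j : α} (hj : j ∈ W) :
    shapley I (countGame P W F) j = countShapley (fun a b => F b a) #W #P :=
  shapley_countGame_of_mem_left hW hP hPW.symm (fun a b => F b a) hj

theorem shapley_countGame_of_notMem {I P W : Finset α} (F : ℕ → ℕ → ℝ) {j : α}
    (hjP : j ∉ P) (hjW : j ∉ W) : shapley I (countGame P W F) j = 0 :=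
  shapley_eq_zero_of_forall_insert_eq fun S _ => by
    simp only [countGame, insert_inter_of_notMem hjP, insert_inter_of_notMem hjW]

theorem sum_sum_powerset_erase {M : Type*} [AddCommMonoid M] (I : Finset α)
    (f : Finset α → M) :
    ∑ j ∈ I, ∑ S ∈ (I.erase j).powerset, f S = ∑ T ∈ I.powerset, #(I \ T) • f T := by
  rw [sum_comm' (t' := I.powerset) (s' := fun T => I \ T)]
  · simp only [sum_const]
  · intro j S
    simp only [mem_powerset, mem_sdiff, subset_erase]
    tauto

theorem sum_sum_powerset_erase_insert {M : Type*} [AddCommGroup M] (I : Finset α)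
    (f : Finset α → M) :
    ∑ j ∈ I, ∑ S ∈ (I.erase j).powerset, f (insert j S) = ∑ T ∈ I.powerset, #T • f T := by
  have h : ∀ j ∈ I, ∑ S ∈ (I.erase j).powerset, f (insert j S) =
      ∑ T ∈ I.powerset, f T - ∑ S ∈ (I.erase j).powerset, f S := fun j hj => by
    rw [eq_sub_iff_add_eq', ← sum_powerset_insert (notMem_erase j I), insert_erase hj]
  rw [sum_congr rfl h, sum_sub_distrib, sum_const, sum_sum_powerset_erase, smul_sum,
    ← sum_sub_distrib]
  refine sum_congr rfl fun T hT => ?_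
  rw [← card_sdiff_add_card_eq_card (mem_powerset.1 hT), add_smul, add_sub_cancel_left]

theorem natCast_div_mul_choose_pred_pred {m t : ℕ} (h₁ : 1 ≤ t) (h₂ : t ≤ m) :
    (t : ℝ) / (m * (m - 1).choose (t - 1)) = 1 / m.choose t := by
  have h := Nat.add_one_mul_choose_eq (m - 1) (t - 1)
  rw [Nat.sub_add_cancel (h₁.trans h₂), Nat.sub_add_cancel h₁] at h
  have : (0 : ℝ) < m.choose t := by exact_mod_cast Nat.choose_pos h₂
  have : (0 : ℝ) < t := by exact_mod_cast h₁
  rw [show (m : ℝ) * (m - 1).choose (t - 1) = m.choose t * t by exact_mod_cast h]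
  field_simp

theorem natCast_sub_div_mul_choose_pred {m t : ℕ} (h : t < m) :
    ((m - t : ℕ) : ℝ) / (m * (m - 1).choose t) = 1 / m.choose t := by
  have h' := Nat.choose_mul_succ_eq (m - 1) t
  rw [Nat.sub_add_cancel (by omega)] at h'
  have : (0 : ℝ) < m.choose t := by exact_mod_cast Nat.choose_pos h.le
  have : (0 : ℝ) < (m - t : ℕ) := by exact_mod_cast Nat.sub_pos_of_lt h
  rw [show (m : ℝ) * (m - 1).choose t = m.choose t * (m - t : ℕ) by
    rw [mul_comm]; exact_mod_cast h']
  field_simp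

theorem sum_shapley (I : Finset α) (v : Finset α → ℝ) : ∑ j ∈ I, shapley I v j = v I - v ∅ := by
  set m := #I
  -- A coalition `T ≠ ∅, I` gets the same total weight `1 / binom(m, #T)` from the players it
  -- contains (as `insert j S`) and from those it lacks (as `S`), so only `v I` and `v ∅` survive.
  have hin : ∀ T ∈ I.powerset, #T • (v T / (m * (m - 1).choose (#T - 1))) =
      if T ≠ ∅ then v T / m.choose #T else 0 := by
    intro T hT
    split_ifs with hT₀
    · rw [nsmul_eq_mul, ← mul_div_assoc, mul_comm, mul_div_assoc,
        natCast_div_mul_choose_pred_pred (card_pos.2 (nonempty_iff_ne_empty.2 hT₀))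
          (card_le_card (mem_powerset.1 hT)), mul_one_div]
    · simp [not_not.1 hT₀]
  have hout : ∀ T ∈ I.powerset, #(I \ T) • (v T / (m * (m - 1).choose #T)) =
      if T ≠ I then v T / m.choose #T else 0 := by
    intro T hT
    split_ifs with hTI
    · rw [nsmul_eq_mul, ← mul_div_assoc, mul_comm, mul_div_assoc,
        card_sdiff_of_subset (mem_powerset.1 hT),
        natCast_sub_div_mul_choose_pred
          (card_lt_card (ssubset_of_subset_of_ne (mem_powerset.1 hT) hTI)), mul_one_div]
    · simp [not_not.1 hTI]
  have hshapley : ∀ j ∈ I, shapley I v j =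
      ∑ S ∈ (I.erase j).powerset, v (insert j S) / (m * (m - 1).choose (#(insert j S) - 1)) -
        ∑ S ∈ (I.erase j).powerset, v S / (m * (m - 1).choose #S) := fun j _ => by
    rw [shapley, mul_sum, ← sum_sub_distrib]
    refine sum_congr rfl fun S hS => ?_
    have hjS : j ∉ S := fun h => (mem_erase.1 (mem_powerset.1 hS h)).1 rfl
    rw [card_insert_of_notMem hjS, Nat.add_sub_cancel]
    ring
  rw [sum_congr rfl hshapley, sum_sub_distrib,
    sum_sum_powerset_erase_insert I fun T => v T / (m * (m - 1).choose (#T - 1)),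
    sum_sum_powerset_erase, sum_congr rfl hin, sum_congr rfl hout, ← sum_filter, ← sum_filter,
    filter_ne', filter_ne', sum_erase_eq_sub (empty_mem_powerset I),
    sum_erase_eq_sub (mem_powerset_self I)]
  simp [m]

theorem mul_countShapley_add_mul_countShapley_swap (F : ℕ → ℕ → ℝ) (p w : ℕ) :
    p * countShapley F p w + w * countShapley (fun a b => F b a) w p = F p w - F 0 0 := by
  have hPW : Disjoint (range p) (Ico p (p + w)) := by
    rw [range_eq_Ico]; exact Ico_disjoint_Ico_consecutive 0 p (p + w)
  have h := sum_shapley (range p ∪ Ico p (p + w)) (countGame (range p) (Ico p (p + w)) F)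
  rw [sum_union hPW,
    sum_congr rfl fun j hj =>
      shapley_countGame_of_mem_left subset_union_left subset_union_right hPW F hj,
    sum_congr rfl fun j hj =>
      shapley_countGame_of_mem_right subset_union_left subset_union_right hPW F hj,
    sum_const, sum_const] at h
  simpa [countGame, union_inter_cancel_left, union_inter_cancel_right] using h

noncomputable def voteShare (C a b : ℕ) : ℝ :=
  if a + b = 0 then 1 / (C : ℝ) else (a : ℝ) / ((a : ℝ) + (b : ℝ))

theorem psi_eq_voteShare_sub (C a b : ℕ) :
    psi C a b = voteShare C (a + 1) b - voteShare C a b := by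
  unfold psi voteShare
  by_cases hab : a + b = 0
  · obtain ⟨rfl, rfl⟩ := Nat.add_eq_zero_iff.1 hab
    norm_num
  · rw [if_neg hab, if_neg hab, if_neg (by omega)]
    push_cast
    ring

theorem SVpos_eq_countShapley (C p w : ℕ) : SVpos C p w = countShapley (voteShare C) p w := by
  simp only [SVpos, countShapley, psi_eq_voteShare_sub]

theorem SVneg_eq_countShapley {w : ℕ} (C p : ℕ) (hw : w ≠ 0) :
    SVneg C p w = countShapley (fun a b => voteShare C b a) w p := by
  have h := mul_countShapley_add_mul_countShapley_swap (voteShare C) p w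
  have hpw : voteShare C p w = p / (p + w) := if_neg (by omega)
  have h₀ : voteShare C 0 0 = 1 / C := if_pos rfl
  rw [← SVpos_eq_countShapley, hpw, h₀] at h
  rw [SVneg, div_eq_iff (by positivity)]
  linarith

theorem shapley_const_mul_sum_sub_const {ι : Type*} (I : Finset α) (N : Finset ι)
    (v : ι → Finset α → ℝ) (c d : ℝ) (j : α) :
    shapley I (fun S => c * ∑ i ∈ N, v i S - d) j = c * ∑ i ∈ N, shapley I (v i) j := by
  have hmarginal : ∀ S, c * ∑ i ∈ N, v i (insert j S) - d - (c * ∑ i ∈ N, v i S - d) =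
      c * ∑ i ∈ N, (v i (insert j S) - v i S) := fun S => by
    rw [sum_sub_distrib]
    ring
  simp only [shapley, hmarginal]
  simp only [mul_sum, sum_div]
  rw [sum_comm]
  refine sum_congr rfl fun i _ => sum_congr rfl fun S _ => ?_
  ring

section WeakLabels

variable {C n m : ℕ} (L : Fin n → Fin m → Option (Fin C)) (i : Fin n) (y : Fin C)

def votersFor : Finset (Fin m) := univ.filter fun k => L i k = some y

def votersAgainst : Finset (Fin m) := univ.filter fun k => L i k ≠ none ∧ L i k ≠ some y

theorem disjoint_votersFor_votersAgainst : Disjoint (votersFor L i y) (votersAgainst L i y) := by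
  simp only [votersFor, votersAgainst, disjoint_filter]
  tauto

theorem theta_eq_countGame (S : Finset (Fin m)) :
    theta C n m L S y i = countGame (votersFor L i y) (votersAgainst L i y) (voteShare C) S := by
  have hfor : S.filter (fun k => L i k = some y) = S ∩ votersFor L i y := by
    ext k
    simp [votersFor]
  have hvoting : S.filter (fun k => L i k ≠ none) =
      S ∩ votersFor L i y ∪ S ∩ votersAgainst L i y := by
    ext k
    simp only [votersFor, votersAgainst, mem_filter, mem_union, mem_inter, mem_univ, true_and]
    grind
  rw [theta, countGame, voteShare, hfor, hvoting, card_union_of_disjoint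
    ((disjoint_votersFor_votersAgainst L i y).mono inter_subset_right inter_subset_right)]
  push_cast
  rfl

theorem shapley_theta_eq_weshapWeight (j : Fin m) :
    shapley univ (fun S => theta C n m L S y i) j = weshapWeight C n m L i j y := by
  have hdisj := disjoint_votersFor_votersAgainst L i y
  rw [funext (theta_eq_countGame L i y)]
  rcases h : L i j with _ | c
  · rw [shapley_countGame_of_notMem _ (by simp [votersFor, h]) (by simp [votersAgainst, h])]
    simp [weshapWeight, h]
  by_cases hc : c = y
  · subst hc
    rw [shapley_countGame_of_mem_left (subset_univ _) (subset_univ _) hdisj _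
      (by simp [votersFor, h]), ← SVpos_eq_countShapley]
    simp [weshapWeight, h, votersFor, votersAgainst]
  · have hj : j ∈ votersAgainst L i y := by simp [votersAgainst, h, hc]
    rw [shapley_countGame_of_mem_right (subset_univ _) (subset_univ _) hdisj _ hj,
      ← SVneg_eq_countShapley _ _ (card_ne_zero_of_mem hj)]
    simp [weshapWeight, h, hc, votersFor, votersAgainst]

end WeakLabels

theorem stmt_11_general (C : ℕ) (n m : ℕ)
    (L : Fin n → Fin m → Option (Fin C)) (y : Fin C)
    (N : Finset (Fin n)) (K : ℕ) (j : Fin m) :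
    shapley (Finset.univ : Finset (Fin m))
        (fun S => (1 / (K : ℝ)) * ∑ i ∈ N, theta C n m L S y i - 1 / (C : ℝ)) j =
      (1 / (K : ℝ)) * ∑ i ∈ N, weshapWeight C n m L i j y := by
  rw [shapley_const_mul_sum_sub_const univ N (fun i S => theta C n m L S y i)]
  simp only [shapley_theta_eq_weshapWeight]

/-- The Shapley value of LF `j` in the single-instance proxy game on neighbor set `N`
(with `|N| = K`) equals the average of the WeShap weights `φ_{ij}^y` over `i ∈ N`. -/
theorem stmt_11 (C : ℕ) (hC : 2 ≤ C) (n m : ℕ) (hn : 1 ≤ n) (hm : 1 ≤ m)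
    (L : Fin n → Fin m → Option (Fin C)) (y : Fin C)
    (N : Finset (Fin n)) (hN : N.Nonempty) (K : ℕ) (hK : N.card = K) (j : Fin m) :
    shapley (Finset.univ : Finset (Fin m))
        (fun S => (1 / (K : ℝ)) * ∑ i ∈ N, theta C n m L S y i - 1 / (C : ℝ)) j =
      (1 / (K : ℝ)) * ∑ i ∈ N, weshapWeight C n m L i j y :=
  stmt_11_general C n m L y N K j
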